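/- There exists a constant c > 1 such that for all integers m, k > 1 and every odd integer n ≥ 3, one has ℓ(X_{1,m} ∩ X_{n,k}) < c·ℓ(X_{1,m})·ℓ(X_{n,k}). -/

import Mathlib

open MeasureTheory

/-- The Gauss map `G(x) = 1/x - ⌊1/x⌋`. -/
noncomputable def gaussMap (x : ℝ) : ℝ := Int.fract x⁻¹

/-- The `m`-th continued fraction digit `a_m(x) = ⌊1 / G^{m-1}(x)⌋` (for `m ≥ 1`). -/
noncomputable def cfDigit (m : ℕ) (x : ℝ) : ℤ := ⌊(gaussMap^[m - 1] x)⁻¹⌋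

/-- `X_{m,n}`: the set of irrational `x ∈ (0,1)` whose `m`-th continued fraction
digit exceeds `n`. -/
def cfSet (m n : ℕ) : Set ℝ :=
  {x | x ∈ Set.Ioo (0 : ℝ) 1 ∧ Irrational x ∧ (n : ℤ) < cfDigit m x}

open Set
open scoped ENNReal

/-! Every `x` satisfies `x = 1 / (a₁(x) + G x)`, so on `X_{1,m}` the point `x` is the image
of `G x` under one of the inverse branches `t ↦ 1 / (d + t)` with `d > m`. These branches shrink
Lebesgue measure by a factor at least `d²`, and `∑_{d > m} 1 / d² ≤ 2 / (m + 1) = 2 ℓ(X_{1,m})`;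
since `G x ∈ X_{n-1,k}` for `x ∈ X_{n,k}`, this gives
`ℓ(X_{1,m} ∩ X_{n,k}) ≤ 2 ℓ(X_{1,m}) ℓ(X_{n-1,k})`. Conversely the branch `t ↦ 1 / (1 + t)`
maps `X_{n-1,k}` into `X_{n,k}` and shrinks measure by at most `4`, so
`ℓ(X_{n-1,k}) ≤ 4 ℓ(X_{n,k})`. Hence `c = 9` works; the inequality is strict because all the
sets have positive measure. -/

noncomputable def gaussBranch (d : ℕ) (t : ℝ) : ℝ := ((d : ℝ) + t)⁻¹

lemma inv_floor_inv_add_gaussMap (x : ℝ) : ((⌊x⁻¹⌋ : ℝ) + gaussMap x)⁻¹ = x := by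
  rw [gaussMap, Int.floor_add_fract, inv_inv]

lemma gaussMap_gaussBranch (d : ℕ) {t : ℝ} (ht : t ∈ Ico 0 1) :
    gaussMap (gaussBranch d t) = t := by
  rw [gaussMap, gaussBranch, inv_inv, Int.fract_natCast_add, Int.fract_eq_self.2 ht]

lemma Irrational.gaussMap {x : ℝ} (hx : Irrational x) : Irrational (_root_.gaussMap x) :=
  hx.inv.sub_intCast ⌊x⁻¹⌋

lemma Irrational.gaussMap_mem_Ioo {x : ℝ} (hx : Irrational x) : _root_.gaussMap x ∈ Ioo 0 1 :=
  ⟨(Int.fract_nonneg _).lt_of_ne fun h =>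
    hx.gaussMap.ne_int 0 (by simpa [_root_.gaussMap] using h.symm), Int.fract_lt_one _⟩

lemma cfDigit_succ {j : ℕ} (hj : j ≠ 0) (x : ℝ) :
    cfDigit (j + 1) x = cfDigit j (gaussMap x) := by
  obtain ⟨i, rfl⟩ := Nat.exists_eq_succ_of_ne_zero hj
  simp only [cfDigit, Function.iterate_succ_apply, Nat.succ_sub_one]

lemma mem_cfSet_succ {j k : ℕ} (hj : j ≠ 0) {x : ℝ} :
    x ∈ cfSet (j + 1) k ↔ x ∈ Ioo 0 1 ∧ Irrational x ∧ gaussMap x ∈ cfSet j k := by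
  simp only [cfSet, mem_ofPred_eq, cfDigit_succ hj]
  constructor
  · rintro ⟨hx, hirr, hdigit⟩
    exact ⟨hx, hirr, hirr.gaussMap_mem_Ioo, hirr.gaussMap, hdigit⟩
  · rintro ⟨hx, hirr, -, -, hdigit⟩
    exact ⟨hx, hirr, hdigit⟩

lemma measurable_gaussMap : Measurable gaussMap := measurable_inv.fract

lemma measurableSet_cfSet (j k : ℕ) : MeasurableSet (cfSet j k) := by
  have hirr : MeasurableSet {x : ℝ | Irrational x} := (countable_range _).measurableSet.compl
  have hdigit : Measurable (cfDigit j) :=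
    Int.measurable_floor.comp (measurable_inv.comp (measurable_gaussMap.iterate _))
  exact measurableSet_Ioo.inter (hirr.inter (measurableSet_lt measurable_const hdigit))

lemma le_volume_cfSet_one (m : ℕ) :
    ENNReal.ofReal ((m : ℝ) + 1)⁻¹ ≤ volume (cfSet 1 m) := by
  have hsub : Ioo 0 ((m : ℝ) + 1)⁻¹ \ range ((↑) : ℚ → ℝ) ⊆ cfSet 1 m := by
    rintro x ⟨⟨hx0, hxm⟩, hirr⟩
    have hm : (m : ℝ) + 1 < x⁻¹ := lt_inv_of_lt_inv₀ hx0 hxm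
    refine ⟨⟨hx0, hxm.trans_le (inv_le_one_of_one_le₀ (by simp))⟩, hirr, ?_⟩
    show (m : ℤ) < ⌊x⁻¹⌋
    rw [← Int.add_one_le_iff, Int.le_floor]
    push_cast
    exact hm.le
  calc ENNReal.ofReal ((m : ℝ) + 1)⁻¹
      = volume (Ioo 0 ((m : ℝ) + 1)⁻¹ \ range ((↑) : ℚ → ℝ)) := by
        rw [measure_sdiff_null ((countable_range _).measure_zero _), Real.volume_Ioo, sub_zero]
    _ ≤ volume (cfSet 1 m) := measure_mono hsub

lemma volume_cfSet_ne_top (j k : ℕ) : volume (cfSet j k) ≠ ⊤ :=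
  measure_ne_top_of_subset (fun _ hx => hx.1) (by simp : volume (Ioo (0 : ℝ) 1) ≠ ⊤)

lemma hasDerivAt_gaussBranch (d : ℕ) {t : ℝ} (ht : (d : ℝ) + t ≠ 0) :
    HasDerivAt (gaussBranch d) (-(((d : ℝ) + t) ^ 2)⁻¹) t := by
  unfold gaussBranch
  simpa [div_eq_mul_inv] using ((hasDerivAt_id t).const_add (d : ℝ)).fun_inv ht

lemma gaussBranch_injective (d : ℕ) : Function.Injective (gaussBranch d) :=
  fun _ _ h => add_left_cancel (inv_injective h)

lemma volume_image_gaussBranch (d : ℕ) {E : Set ℝ} (hE : MeasurableSet E) (hE0 : E ⊆ Ioi 0) :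
    volume (gaussBranch d '' E) = ∫⁻ t in E, ENNReal.ofReal (((d : ℝ) + t) ^ 2)⁻¹ := by
  have hderiv :
      ∀ t ∈ E, HasDerivWithinAt (gaussBranch d) (-(((d : ℝ) + t) ^ 2)⁻¹) E t := by
    intro t ht
    have : 0 < t := hE0 ht
    exact (hasDerivAt_gaussBranch d (by positivity)).hasDerivWithinAt
  rw [← setLIntegral_one, lintegral_image_eq_lintegral_abs_deriv_mul hE hderiv
    (gaussBranch_injective d).injOn]
  simp_rw [mul_one, abs_neg, abs_inv, abs_sq]

lemma volume_image_gaussBranch_le {d : ℕ} (hd : d ≠ 0) {E : Set ℝ} (hE : MeasurableSet E)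
    (hE0 : E ⊆ Ioi 0) :
    volume (gaussBranch d '' E) ≤ ENNReal.ofReal ((d : ℝ) ^ 2)⁻¹ * volume E := by
  rw [volume_image_gaussBranch d hE hE0, ← setLIntegral_const]
  refine setLIntegral_mono (by fun_prop) fun t ht => ENNReal.ofReal_le_ofReal ?_
  have : 0 < t := hE0 ht
  gcongr
  linarith

lemma le_volume_image_gaussBranch (d : ℕ) {E : Set ℝ} (hE : MeasurableSet E)
    (hE01 : E ⊆ Ioo 0 1) :
    ENNReal.ofReal (((d : ℝ) + 1) ^ 2)⁻¹ * volume E ≤ volume (gaussBranch d '' E) := by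
  rw [volume_image_gaussBranch d hE (hE01.trans Ioo_subset_Ioi_self), ← setLIntegral_const]
  refine setLIntegral_mono (by fun_prop) fun t ht => ENNReal.ofReal_le_ofReal ?_
  obtain ⟨ht0, ht1⟩ := hE01 ht
  gcongr

lemma tsum_Ioi_inv_sq_le (m : ℕ) :
    ∑' d : Ioi m, ENNReal.ofReal ((d : ℝ) ^ 2)⁻¹ ≤ ENNReal.ofReal (2 / (m + 1)) := by
  rw [tsum_subtype (Ioi m) fun d : ℕ => ENNReal.ofReal ((d : ℝ) ^ 2)⁻¹]
  refine ENNReal.tsum_le_of_sum_range_le fun N => ?_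
  have hfilter : (Finset.range N).filter (· ∈ Ioi m) = Finset.Ioo m N := by
    ext d; simp [and_comm]
  rw [Finset.sum_indicator_eq_sum_filter, hfilter,
    ← ENNReal.ofReal_sum_of_nonneg fun _ _ => by positivity]
  exact ENNReal.ofReal_le_ofReal (sum_Ioo_inv_sq_le m N)

lemma cfSet_one_inter_cfSet_succ_subset (m k : ℕ) {j : ℕ} (hj : j ≠ 0) :
    cfSet 1 m ∩ cfSet (j + 1) k ⊆ ⋃ d ∈ Ioi m, gaussBranch d '' cfSet j k := by
  rintro x ⟨⟨-, -, hm⟩, hx⟩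
  change (m : ℤ) < ⌊x⁻¹⌋ at hm
  have hd : ((⌊x⁻¹⌋.toNat : ℕ) : ℝ) = ⌊x⁻¹⌋ := by
    exact_mod_cast Int.toNat_of_nonneg (by omega)
  refine mem_biUnion (x := ⌊x⁻¹⌋.toNat) (mem_Ioi.2 (by omega))
    ⟨gaussMap x, ((mem_cfSet_succ hj).1 hx).2.2, ?_⟩
  rw [gaussBranch, hd, inv_floor_inv_add_gaussMap]

lemma volume_cfSet_one_inter_cfSet_succ_le (m k : ℕ) {j : ℕ} (hj : j ≠ 0) :
    volume (cfSet 1 m ∩ cfSet (j + 1) k) ≤ ENNReal.ofReal (2 / (m + 1)) * volume (cfSet j k) :=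
  calc volume (cfSet 1 m ∩ cfSet (j + 1) k)
      ≤ ∑' d : Ioi m, volume (gaussBranch d '' cfSet j k) :=
        (measure_mono (cfSet_one_inter_cfSet_succ_subset m k hj)).trans
          (measure_biUnion_le _ (to_countable _) _)
    _ ≤ ∑' d : Ioi m, ENNReal.ofReal ((d : ℝ) ^ 2)⁻¹ * volume (cfSet j k) :=
        ENNReal.tsum_le_tsum fun d => volume_image_gaussBranch_le (Nat.ne_zero_of_lt d.2)
          (measurableSet_cfSet j k) fun _ hx => hx.1.1
    _ = (∑' d : Ioi m, ENNReal.ofReal ((d : ℝ) ^ 2)⁻¹) * volume (cfSet j k) :=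
        ENNReal.tsum_mul_right
    _ ≤ ENNReal.ofReal (2 / (m + 1)) * volume (cfSet j k) := by
        gcongr; exact tsum_Ioi_inv_sq_le m

lemma volume_cfSet_le_four_mul_volume_cfSet_succ (k : ℕ) {j : ℕ} (hj : j ≠ 0) :
    volume (cfSet j k) ≤ 4 * volume (cfSet (j + 1) k) := by
  have hsub : gaussBranch 1 '' cfSet j k ⊆ cfSet (j + 1) k := by
    rintro _ ⟨t, ht, rfl⟩
    have ⟨⟨ht0, ht1⟩, hirr, _⟩ := ht
    refine (mem_cfSet_succ hj).2 ⟨⟨by unfold gaussBranch; positivity, ?_⟩, ?_, ?_⟩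
    · exact inv_lt_one_of_one_lt₀ (by push_cast; linarith)
    · exact (hirr.natCast_add 1).inv
    · rwa [gaussMap_gaussBranch 1 ⟨ht0.le, ht1⟩]
  have hbranch := (le_volume_image_gaussBranch 1 (measurableSet_cfSet j k) fun _ ht => ht.1).trans
    (measure_mono hsub)
  calc volume (cfSet j k)
      = 4 * (ENNReal.ofReal (((1 : ℕ) + 1 : ℝ) ^ 2)⁻¹ * volume (cfSet j k)) := by
        rw [← mul_assoc, ENNReal.ofReal_inv_of_pos (by norm_num)]
        norm_num
        rw [ENNReal.mul_inv_cancel (by norm_num) (by norm_num), one_mul]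
    _ ≤ 4 * volume (cfSet (j + 1) k) := mul_le_mul' le_rfl hbranch

lemma volume_cfSet_ne_zero (k : ℕ) {j : ℕ} (hj : j ≠ 0) : volume (cfSet j k) ≠ 0 := by
  induction j with
  | zero => contradiction
  | succ i ih =>
    rcases eq_or_ne i 0 with rfl | hi
    · exact ((ENNReal.ofReal_pos.2 (by positivity)).trans_le (le_volume_cfSet_one k)).ne'
    · intro h
      exact ih hi (by simpa [h] using volume_cfSet_le_four_mul_volume_cfSet_succ k hi)

lemma volume_cfSet_one_inter_cfSet_le (m k : ℕ) {n : ℕ} (hn : 2 ≤ n) :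
    volume (cfSet 1 m ∩ cfSet n k) ≤ 8 * volume (cfSet 1 m) * volume (cfSet n k) := by
  obtain ⟨j, rfl⟩ : ∃ j, n = j + 1 := ⟨n - 1, by omega⟩
  have hm : ENNReal.ofReal (2 / (m + 1)) ≤ 2 * volume (cfSet 1 m) := by
    rw [div_eq_mul_inv, ENNReal.ofReal_mul zero_le_two, ENNReal.ofReal_ofNat]
    gcongr
    exact le_volume_cfSet_one m
  calc volume (cfSet 1 m ∩ cfSet (j + 1) k)
      ≤ ENNReal.ofReal (2 / (m + 1)) * volume (cfSet j k) :=
        volume_cfSet_one_inter_cfSet_succ_le m k (by omega)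
    _ ≤ 2 * volume (cfSet 1 m) * (4 * volume (cfSet (j + 1) k)) :=
        mul_le_mul' hm (volume_cfSet_le_four_mul_volume_cfSet_succ k (by omega))
    _ = 8 * volume (cfSet 1 m) * volume (cfSet (j + 1) k) := by ring

/-- There is a constant `c > 1` such that for all integers `m, k > 1` and every
odd `n ≥ 3`, `ℓ(X_{1,m} ∩ X_{n,k}) < c·ℓ(X_{1,m})·ℓ(X_{n,k})`. -/
theorem cfSet_first_digit_almost_independent :
    ∃ c : ℝ, 1 < c ∧ ∀ m k n : ℕ, 1 < m → 1 < k → Odd n → 3 ≤ n →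
      volume (cfSet 1 m ∩ cfSet n k) <
        ENNReal.ofReal c * volume (cfSet 1 m) * volume (cfSet n k) := by
  refine ⟨9, by norm_num, fun m k n _ _ _ hn => ?_⟩
  have hpos : volume (cfSet 1 m) * volume (cfSet n k) ≠ 0 :=
    mul_ne_zero (volume_cfSet_ne_zero m one_ne_zero) (volume_cfSet_ne_zero k (by omega))
  have hfin : volume (cfSet 1 m) * volume (cfSet n k) ≠ ⊤ :=
    ENNReal.mul_ne_top (volume_cfSet_ne_top 1 m) (volume_cfSet_ne_top n k)
  calc volume (cfSet 1 m ∩ cfSet n k) ≤ 8 * volume (cfSet 1 m) * volume (cfSet n k) :=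
        volume_cfSet_one_inter_cfSet_le m k (by omega)
    _ < ENNReal.ofReal 9 * volume (cfSet 1 m) * volume (cfSet n k) := by
        rw [mul_assoc, mul_assoc, ENNReal.mul_lt_mul_iff_left hpos hfin]
        norm_num
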